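/- Let y, z, p : ℝ² → ℝ be smooth functions such that the map f(u,v) = (u, y(u,v), z(u,v), p(u,v), v) satisfies the contact condition on ℝ² (z_u = p + v·y_u and z_v = v·y_v) and the Hess = 0 condition on ℝ² (which for this f reads p_u = 0). Then p_u = 0 and p_v + y_u = 0 hold on ℝ², and there exist smooth functions φ, ψ : ℝ → ℝ such that p(u,v) = φ(v) and y(u,v) = ψ(v) − φ'(v)·u for all (u,v) ∈ ℝ². -/

import Mathlib

noncomputable section
def pu (g : ℝ × ℝ → ℝ) (a : ℝ × ℝ) : ℝ := fderiv ℝ g a (1, 0)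
def pv (g : ℝ × ℝ → ℝ) (a : ℝ × ℝ) : ℝ := fderiv ℝ g a (0, 1)

lemma hasFDerivAt_eval (g : ℝ × ℝ → ℝ) (hg : ContDiff ℝ (⊤ : ℕ∞) g) (w a : ℝ × ℝ) :
    HasFDerivAt (fun x => fderiv ℝ g x w)
      ((ContinuousLinearMap.apply ℝ ℝ w).comp (fderiv ℝ (fderiv ℝ g) a)) a := by
  have h1 : ContDiff ℝ (⊤ : ℕ∞) (fderiv ℝ g) := hg.fderiv_right (m := (⊤:ℕ∞)) (by norm_cast)
  exact (ContinuousLinearMap.apply ℝ ℝ w).hasFDerivAt.comp a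
    (h1.differentiable (by simp) a).hasFDerivAt

lemma symm2 (g : ℝ × ℝ → ℝ) (hg : ContDiff ℝ (⊤ : ℕ∞) g) (a v w : ℝ × ℝ) :
    fderiv ℝ (fderiv ℝ g) a v w = fderiv ℝ (fderiv ℝ g) a w v :=
  second_derivative_symmetric (fun y => (hg.differentiable (by simp) y).hasFDerivAt)
    (((hg.fderiv_right (m := (⊤:ℕ∞)) (by norm_cast)).differentiable (by simp)) a).hasFDerivAt v w

/-- A geometric solution `f(u,v) = (u, y, z, p, v)` to Hess = 0 is determined by two
functions of one variable: `p = φ(v)` and `y = ψ(v) - φ'(v) u`. -/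
theorem stmt9 (y z p : ℝ × ℝ → ℝ)
    (hy : ContDiff ℝ (⊤ : ℕ∞) y) (hz : ContDiff ℝ (⊤ : ℕ∞) z)
    (hp : ContDiff ℝ (⊤ : ℕ∞) p)
    (hcontact : ∀ a : ℝ × ℝ, pu z a = p a + a.2 * pu y a ∧ pv z a = a.2 * pv y a)
    (hhess : ∀ a : ℝ × ℝ, pu p a = 0) :
    (∀ a : ℝ × ℝ, pu p a = 0 ∧ pv p a + pu y a = 0) ∧
    ∃ φ ψ : ℝ → ℝ, ContDiff ℝ (⊤ : ℕ∞) φ ∧ ContDiff ℝ (⊤ : ℕ∞) ψ ∧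
      ∀ a : ℝ × ℝ, p a = φ a.2 ∧ y a = ψ a.2 - deriv φ a.2 * a.1 := by
  have hpd : Differentiable ℝ p := hp.differentiable (by simp)
  have hyd : Differentiable ℝ y := hy.differentiable (by simp)
  simp only [pu, pv] at hcontact hhess ⊢
  -- key identity: p_v + y_u = 0
  have key : ∀ a : ℝ × ℝ, fderiv ℝ p a (0,1) + fderiv ℝ y a (1,0) = 0 := by
    intro a
    have hz1 := hasFDerivAt_eval z hz (1,0) a
    have hz2 := hasFDerivAt_eval z hz (0,1) a
    have hy1 := hasFDerivAt_eval y hy (1,0) a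
    have hy2 := hasFDerivAt_eval y hy (0,1) a
    have hP : HasFDerivAt p (fderiv ℝ p a) a := (hpd a).hasFDerivAt
    have hsnd : HasFDerivAt (fun x : ℝ × ℝ => x.2) (ContinuousLinearMap.snd ℝ ℝ ℝ) a :=
      hasFDerivAt_snd
    have hfun1 : (fun x => fderiv ℝ z x (1,0)) =
        fun x => p x + x.2 * fderiv ℝ y x (1,0) := funext fun x => (hcontact x).1
    have hfun2 : (fun x => fderiv ℝ z x (0,1)) =
        fun x => x.2 * fderiv ℝ y x (0,1) := funext fun x => (hcontact x).2
    have hR1 := hP.add (hsnd.mul hy1)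
    have hR2 := hsnd.mul hy2
    rw [hfun1] at hz1
    rw [hfun2] at hz2
    have e1 := congrArg (fun L => L ((0:ℝ),(1:ℝ))) (hz1.unique hR1)
    have e2 := congrArg (fun L => L ((1:ℝ),(0:ℝ))) (hz2.unique hR2)
    simp only [ContinuousLinearMap.comp_apply, ContinuousLinearMap.apply_apply,
      ContinuousLinearMap.add_apply, ContinuousLinearMap.smul_apply,
      Pi.smul_apply,
      ContinuousLinearMap.coe_snd', smul_eq_mul, mul_one, mul_zero] at e1 e2
    norm_num at e1 e2
    have sy := symm2 y hy a (0,1) (1,0)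
    have sz := symm2 z hz a (0,1) (1,0)
    -- e1 : z'' (0,1)(1,0) = p_v + (a.2 * y''(0,1)(1,0) + y_u * 1)
    -- e2 : z'' (1,0)(0,1) = a.2 * y''(1,0)(0,1) + y_v * 0
    rw [sy] at e1
    linarith [e1, e2, sz]
  refine ⟨fun a => ⟨hhess a, key a⟩, fun v => p (0, v), fun v => y (0, v),
    hp.comp (contDiff_const.prodMk contDiff_id), hy.comp (contDiff_const.prodMk contDiff_id), ?_⟩
  have slice_u : ∀ (g : ℝ × ℝ → ℝ), Differentiable ℝ g → ∀ (v t : ℝ),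
      HasDerivAt (fun t => g (t, v)) (fderiv ℝ g (t, v) (1,0)) t := by
    intro g hg v t
    simpa [Function.comp_def] using (hg (t, v)).hasFDerivAt.comp_hasDerivAt t
      ((hasDerivAt_id t).prodMk (hasDerivAt_const t v))
  have slice_v : ∀ (g : ℝ × ℝ → ℝ), Differentiable ℝ g → ∀ (u t : ℝ),
      HasDerivAt (fun t => g (u, t)) (fderiv ℝ g (u, t) (0,1)) t := by
    intro g hg u t
    simpa [Function.comp_def] using (hg (u, t)).hasFDerivAt.comp_hasDerivAt t
      ((hasDerivAt_const t u).prodMk (hasDerivAt_id t))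
  have hpconst : ∀ a : ℝ × ℝ, p a = p (0, a.2) := by
    rintro ⟨u, v⟩
    exact is_const_of_deriv_eq_zero (fun t => (slice_u p hpd v t).differentiableAt)
      (fun t => by rw [(slice_u p hpd v t).deriv]; exact hhess (t, v)) u 0
  have hderivφ : ∀ a : ℝ × ℝ, deriv (fun v => p (0, v)) a.2 = fderiv ℝ p a (0,1) := by
    rintro ⟨u, v⟩
    have hfe : (fun t => p (u, t)) = fun t => p (0, t) := funext fun t => hpconst (u, t)
    have := (slice_v p hpd u v).deriv
    rw [hfe] at this
    exact this
  rintro ⟨u, v⟩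
  refine ⟨hpconst (u, v), ?_⟩
  have hconst : ∀ t : ℝ, HasDerivAt (fun t => y (t, v) + deriv (fun v => p (0, v)) v * t) 0 t := by
    intro t
    have h1 := (slice_u y hyd v t).add
      ((hasDerivAt_id t).const_mul (deriv (fun v => p (0, v)) v))
    have e : fderiv ℝ y (t, v) (1,0) + deriv (fun v => p (0, v)) v * 1 = 0 := by
      rw [hderivφ (t, v), mul_one]
      have := key (t, v); linarith
    rw [e] at h1
    exact h1
  have := is_const_of_deriv_eq_zero (fun t => (hconst t).differentiableAt)
    (fun t => (hconst t).deriv) u 0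
  simp only [mul_zero, add_zero] at this
  linarith [this]
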